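/- arXiv:2603.26149 — 2 statements merged into one kernel-verified Lean document; each statement's English description precedes it below -/
import Mathlib

section
/- Let B and B̃ be m×m real symmetric positive semidefinite matrices, and let K, I be subspaces of ℝ^m with I ⊆ Im(B̃) and (ker(B) ∩ ker(B̃))^⊥ ∩ ker(B̃) ⊆ K ⊆ ker(B̃). Let Π be the Euclidean orthogonal projector onto S = K ⊕ I. Then for every w ∈ ker(B̃), the vector w − Π w lies in ker(B) ∩ ker(B̃); in particular B(w − Π w) = 0. -/
open Matrix

/-!
Write `V = ker B̃` and `N = ker B ∩ ker B̃`. Since `B̃` is symmetric, `I ⊆ Im B̃ = Vᗮ`, and `K ⊆ V`;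
so `w - Π_K w` lies in `V` and hence is orthogonal to `I`, which makes `Π_K w` also the projection of
`w` onto `K ⊕ I`. The residual is then in `V ∩ Kᗮ`, and the hypothesis `Nᗮ ∩ V ⊆ K` says that
`N` exhausts this part of `V`: the `Nᗮ`-component of the residual lies in `K` and is orthogonal to
the residual itself, so it vanishes.
-/

namespace Submodule

variable {𝕜 E : Type*} [RCLike 𝕜] [NormedAddCommGroup E] [InnerProductSpace 𝕜 E]

theorem starProjection_sup_eq_of_le_orthogonal {K I V : Submodule 𝕜 E}
    [K.HasOrthogonalProjection] [(K ⊔ I).HasOrthogonalProjection]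
    (hK : K ≤ V) (hI : I ≤ Vᗮ) {w : E} (hw : w ∈ V) :
    (K ⊔ I).starProjection w = K.starProjection w := by
  have hres : w - K.starProjection w ∈ V := V.sub_mem hw (hK (K.starProjection_apply_mem w))
  refine eq_starProjection_of_mem_orthogonal (mem_sup_left (K.starProjection_apply_mem w)) ?_
  rw [← inf_orthogonal]
  exact ⟨K.sub_starProjection_mem_orthogonal w,
    (le_orthogonal_orthogonal V).trans (orthogonal_le hI) hres⟩

theorem inf_orthogonal_le_of_orthogonal_inf_le {K N V : Submodule 𝕜 E} [N.HasOrthogonalProjection]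
    (hNV : N ≤ V) (hK : Nᗮ ⊓ V ≤ K) : V ⊓ Kᗮ ≤ N := by
  rintro r ⟨hrV, hrK⟩
  obtain ⟨n, hn, p, hp, rfl⟩ := exists_add_mem_mem_orthogonal (K := N) r
  have hpK : p ∈ K := hK ⟨hp, by simpa using V.sub_mem hrV (hNV hn)⟩
  have hpp : inner 𝕜 p p = 0 := by
    have := inner_left_of_mem_orthogonal hpK hrK
    rwa [inner_add_left, inner_right_of_mem_orthogonal hn hp, zero_add] at this
  rw [inner_self_eq_zero.1 hpp, add_zero]
  exact hn

end Submodule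

theorem residual_mem_ker_general {m : ℕ} (B Bt : Matrix (Fin m) (Fin m) ℝ)
    (hBt : Bt.PosSemidef)
    (K I : Submodule ℝ (EuclideanSpace ℝ (Fin m)))
    (hI : I ≤ LinearMap.range (Matrix.toEuclideanLin Bt))
    (hK1 : ((LinearMap.ker (Matrix.toEuclideanLin B) ⊓
        LinearMap.ker (Matrix.toEuclideanLin Bt))ᗮ ⊓
        LinearMap.ker (Matrix.toEuclideanLin Bt)) ≤ K)
    (hK2 : K ≤ LinearMap.ker (Matrix.toEuclideanLin Bt)) :
    ∀ w ∈ LinearMap.ker (Matrix.toEuclideanLin Bt),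
      (w - (Submodule.orthogonalProjectionOnto (K ⊔ I) w : EuclideanSpace ℝ (Fin m)) ∈
          LinearMap.ker (Matrix.toEuclideanLin B) ⊓
            LinearMap.ker (Matrix.toEuclideanLin Bt)) ∧
        Matrix.toEuclideanLin B
          (w - (Submodule.orthogonalProjectionOnto (K ⊔ I) w : EuclideanSpace ℝ (Fin m))) = 0 := by
  intro w hw
  have hsymm := Matrix.isSymmetric_toEuclideanLin_iff.2 hBt.1
  have hIV : I ≤ (LinearMap.ker (Matrix.toEuclideanLin Bt))ᗮ := by
    rw [← hsymm.orthogonal_range]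
    exact hI.trans (Submodule.le_orthogonal_orthogonal _)
  have hres : w - K.starProjection w ∈ LinearMap.ker (Matrix.toEuclideanLin Bt) ⊓ Kᗮ :=
    ⟨Submodule.sub_mem _ hw (hK2 (K.starProjection_apply_mem w)),
      K.sub_starProjection_mem_orthogonal w⟩
  have hN := Submodule.inf_orthogonal_le_of_orthogonal_inf_le inf_le_right hK1 hres
  rw [← Submodule.starProjection_apply, Submodule.starProjection_sup_eq_of_le_orthogonal hK2 hIV hw]
  exact ⟨hN, hN.1⟩

/-- under the kernel/image assumptions on `K` and `I`, for every
`w ∈ ker(B̃)` the residual `w − Π w` of the Euclidean orthogonal projection onto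
`S = K ⊕ I` lies in `ker(B) ∩ ker(B̃)`; in particular `B (w − Π w) = 0`. -/
theorem residual_mem_ker {m : ℕ} (B Bt : Matrix (Fin m) (Fin m) ℝ)
    (hB : B.PosSemidef) (hBt : Bt.PosSemidef)
    (K I : Submodule ℝ (EuclideanSpace ℝ (Fin m)))
    (hI : I ≤ LinearMap.range (Matrix.toEuclideanLin Bt))
    (hK1 : ((LinearMap.ker (Matrix.toEuclideanLin B) ⊓
        LinearMap.ker (Matrix.toEuclideanLin Bt))ᗮ ⊓
        LinearMap.ker (Matrix.toEuclideanLin Bt)) ≤ K)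
    (hK2 : K ≤ LinearMap.ker (Matrix.toEuclideanLin Bt)) :
    ∀ w ∈ LinearMap.ker (Matrix.toEuclideanLin Bt),
      (w - (Submodule.orthogonalProjectionOnto (K ⊔ I) w : EuclideanSpace ℝ (Fin m)) ∈
          LinearMap.ker (Matrix.toEuclideanLin B) ⊓
            LinearMap.ker (Matrix.toEuclideanLin Bt)) ∧
        Matrix.toEuclideanLin B
          (w - (Submodule.orthogonalProjectionOnto (K ⊔ I) w : EuclideanSpace ℝ (Fin m))) = 0 :=
  residual_mem_ker_general B Bt hBt K I hI hK1 hK2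
end

section
/- Let Ã and S be n×n real symmetric positive semidefinite matrices such that xᵀ S x ≤ M xᵀ Ã x for all x ∈ ℝⁿ, for some constant M > 0. Let T, T̂ ∈ ℝ^{n×n^c} satisfy Tᵀ Ã T = I_{n^c} and T̂ᵀ Ã T̂ = I_{n^c}, with associated Ã-orthogonal projectors Π = T Tᵀ Ã and Π̂ = T̂ T̂ᵀ Ã. Then for every v ∈ ℝⁿ, (Π v − Π̂ v)ᵀ S (Π v − Π̂ v) ≤ 2 M (n^c − ‖T̂ᵀ Ã T‖_F²) · vᵀ Ã v, where ‖·‖_F denotes the Frobenius norm. -/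
/-!
Factor `Ã = Bᵀ B`. Then `U = B T` and `Û = B T̂` have orthonormal columns, `B Π = U Uᵀ B`,
`B Π̂ = Û Ûᵀ B` and `T̂ᵀ Ã T = Ûᵀ U`, so after `S ≤ M Ã` the claim becomes the Euclidean bound
`‖(U Uᵀ - Û Ûᵀ) y‖² ≤ 2 (n^c - ‖Ûᵀ U‖_F²) ‖y‖²`. For that, split
`U Uᵀ - Û Ûᵀ = U Uᵀ (1 - Û Ûᵀ) - (1 - U Uᵀ) Û Ûᵀ` into two pieces with orthogonal ranges and bound
each through its squared Frobenius norm, which is `n^c - ‖Ûᵀ U‖_F²` in both cases.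
-/

open Matrix

/-- Squared Frobenius norm of a real matrix. -/
noncomputable def frobSq {a b : ℕ} (M : Matrix (Fin a) (Fin b) ℝ) : ℝ :=
  ∑ i, ∑ j, (M i j) ^ 2

section Frobenius

variable {a b : ℕ}

lemma frobSq_transpose (X : Matrix (Fin a) (Fin b) ℝ) : frobSq Xᵀ = frobSq X :=
  Finset.sum_comm

lemma frobSq_eq_trace_mul_transpose (X : Matrix (Fin a) (Fin b) ℝ) :
    frobSq X = trace (X * Xᵀ) := by
  simp only [frobSq, trace, diag, mul_apply, transpose_apply, sq]

lemma frobSq_eq_trace_transpose_mul (X : Matrix (Fin a) (Fin b) ℝ) :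
    frobSq X = trace (Xᵀ * X) := by
  rw [frobSq_eq_trace_mul_transpose, trace_mul_comm]

lemma mulVec_dotProduct_mulVec_self_le_frobSq (X : Matrix (Fin a) (Fin b) ℝ) (x : Fin b → ℝ) :
    X *ᵥ x ⬝ᵥ X *ᵥ x ≤ frobSq X * (x ⬝ᵥ x) := by
  have row_le : ∀ i, (X *ᵥ x) i * (X *ᵥ x) i ≤ (∑ j, X i j ^ 2) * (x ⬝ᵥ x) := fun i => by
    simpa [mulVec, dotProduct, sq] using
      Finset.sum_mul_sq_le_sq_mul_sq Finset.univ (fun j => X i j) x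
  calc X *ᵥ x ⬝ᵥ X *ᵥ x ≤ ∑ i, (∑ j, X i j ^ 2) * (x ⬝ᵥ x) := Finset.sum_le_sum fun i _ => row_le i
    _ = frobSq X * (x ⬝ᵥ x) := by rw [frobSq, Finset.sum_mul]

lemma frobSq_mul_of_transpose_mul_self_eq_one {c : ℕ} {U : Matrix (Fin a) (Fin c) ℝ}
    (hU : Uᵀ * U = 1) (W : Matrix (Fin c) (Fin b) ℝ) : frobSq (U * W) = frobSq W := by
  rw [frobSq_eq_trace_transpose_mul, frobSq_eq_trace_transpose_mul, transpose_mul,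
    Matrix.mul_assoc, ← Matrix.mul_assoc Uᵀ, hU, Matrix.one_mul]

end Frobenius

namespace Matrix

lemma mulVec_dotProduct_mulVec {m k l R : Type*} [Fintype m] [Fintype k] [Fintype l]
    [CommSemiring R] (X : Matrix m k R) (Y : Matrix m l R) (x : k → R) (y : l → R) :
    X *ᵥ x ⬝ᵥ Y *ᵥ y = x ⬝ᵥ (Xᵀ * Y) *ᵥ y := by
  rw [← mulVec_mulVec, dotProduct_mulVec, dotProduct_mulVec, vecMul_transpose, dotProduct_mulVec]

section OrthonormalColumns

variable {n c : ℕ} {U V : Matrix (Fin n) (Fin c) ℝ}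

lemma isIdempotentElem_mul_transpose_self (hU : Uᵀ * U = 1) : IsIdempotentElem (U * Uᵀ) := by
  rw [IsIdempotentElem, Matrix.mul_assoc, ← Matrix.mul_assoc Uᵀ, hU, Matrix.one_mul]

lemma frobSq_mul_transpose_mul_one_sub (hU : Uᵀ * U = 1) (hV : Vᵀ * V = 1) :
    frobSq (U * Uᵀ * (1 - V * Vᵀ)) = c - frobSq (Vᵀ * U) := by
  have hcompl : (1 - V * Vᵀ) * (1 - V * Vᵀ)ᵀ = 1 - V * Vᵀ := by
    rw [transpose_sub, transpose_one, transpose_mul, transpose_transpose,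
      (isIdempotentElem_mul_transpose_self hV).one_sub.eq]
  rw [Matrix.mul_assoc, frobSq_mul_of_transpose_mul_self_eq_one hU, frobSq_eq_trace_mul_transpose,
    transpose_mul, Matrix.mul_assoc, ← Matrix.mul_assoc (1 - V * Vᵀ), hcompl, transpose_transpose,
    frobSq_eq_trace_transpose_mul, Matrix.sub_mul, Matrix.one_mul, Matrix.mul_sub, hU, trace_sub,
    trace_one, transpose_mul, transpose_transpose]
  simp only [Matrix.mul_assoc, Fintype.card_fin]

theorem mul_transpose_sub_mul_transpose_mulVec_normSq_le (hU : Uᵀ * U = 1) (hV : Vᵀ * V = 1)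
    (y : Fin n → ℝ) :
    (U * Uᵀ - V * Vᵀ) *ᵥ y ⬝ᵥ (U * Uᵀ - V * Vᵀ) *ᵥ y ≤
      2 * (c - frobSq (Vᵀ * U)) * (y ⬝ᵥ y) := by
  set a := (U * Uᵀ * (1 - V * Vᵀ)) *ᵥ y
  set b := ((1 - U * Uᵀ) * (V * Vᵀ)) *ᵥ y
  have hsplit : (U * Uᵀ - V * Vᵀ) *ᵥ y = a - b := by
    rw [← sub_mulVec]
    congr 1
    noncomm_ring
  have horth : a ⬝ᵥ b = 0 := by
    have hP : (U * Uᵀ)ᵀ * (1 - U * Uᵀ) = 0 := by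
      rw [transpose_mul, transpose_transpose, Matrix.mul_sub, Matrix.mul_one,
        (isIdempotentElem_mul_transpose_self hU).eq, sub_self]
    rw [mulVec_dotProduct_mulVec, transpose_mul, Matrix.mul_assoc, ← Matrix.mul_assoc (U * Uᵀ)ᵀ,
      hP, Matrix.zero_mul, Matrix.mul_zero, zero_mulVec, dotProduct_zero]
  have ha : a ⬝ᵥ a ≤ (c - frobSq (Vᵀ * U)) * (y ⬝ᵥ y) :=
    frobSq_mul_transpose_mul_one_sub hU hV ▸ mulVec_dotProduct_mulVec_self_le_frobSq _ y
  have hb : b ⬝ᵥ b ≤ (c - frobSq (Vᵀ * U)) * (y ⬝ᵥ y) := by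
    have hfrob : frobSq ((1 - U * Uᵀ) * (V * Vᵀ)) = c - frobSq (Vᵀ * U) := by
      rw [← frobSq_transpose, transpose_mul, transpose_sub, transpose_one]
      simp only [transpose_mul, transpose_transpose]
      rw [frobSq_mul_transpose_mul_one_sub hV hU, ← frobSq_transpose (Uᵀ * V), transpose_mul,
        transpose_transpose]
    exact hfrob ▸ mulVec_dotProduct_mulVec_self_le_frobSq _ y
  rw [hsplit, sub_dotProduct, dotProduct_sub, dotProduct_sub, dotProduct_comm b a, horth]
  linarith

end OrthonormalColumns

end Matrix

open scoped MatrixOrder in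
theorem projector_perturbation_bound_general {n nc : ℕ}
    (A S : Matrix (Fin n) (Fin n) ℝ)
    (hA : A.PosSemidef)
    (M : ℝ) (hM : 0 < M)
    (hdom : ∀ x : Fin n → ℝ, x ⬝ᵥ S.mulVec x ≤ M * (x ⬝ᵥ A.mulVec x))
    (T That : Matrix (Fin n) (Fin nc) ℝ)
    (hT : Tᵀ * A * T = 1) (hThat : Thatᵀ * A * That = 1) :
    ∀ v : Fin n → ℝ,
      ((T * Tᵀ * A).mulVec v - (That * Thatᵀ * A).mulVec v) ⬝ᵥ
          S.mulVec ((T * Tᵀ * A).mulVec v - (That * Thatᵀ * A).mulVec v) ≤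
        2 * M * ((nc : ℝ) - frobSq (Thatᵀ * A * T)) * (v ⬝ᵥ A.mulVec v) := by
  intro v
  obtain ⟨B, rfl⟩ := CStarAlgebra.nonneg_iff_eq_star_mul_self.mp hA.nonneg
  rw [star_eq_conjTranspose, conjTranspose_eq_transpose_of_trivial] at hdom hT hThat ⊢
  have hnormSq (x : Fin n → ℝ) : x ⬝ᵥ (Bᵀ * B) *ᵥ x = B *ᵥ x ⬝ᵥ B *ᵥ x :=
    (mulVec_dotProduct_mulVec B B x x).symm
  have horthonormal {X : Matrix (Fin n) (Fin nc) ℝ} (hX : Xᵀ * (Bᵀ * B) * X = 1) :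
      (B * X)ᵀ * (B * X) = 1 := by
    rwa [transpose_mul, Matrix.mul_assoc, ← Matrix.mul_assoc Bᵀ, ← Matrix.mul_assoc]
  have hintertwine (X : Matrix (Fin n) (Fin nc) ℝ) :
      B * (X * Xᵀ * (Bᵀ * B)) = B * X * (B * X)ᵀ * B := by
    simp only [transpose_mul, Matrix.mul_assoc]
  have hgram : Thatᵀ * (Bᵀ * B) * T = (B * That)ᵀ * (B * T) := by
    simp only [transpose_mul, Matrix.mul_assoc]
  set w := (T * Tᵀ * (Bᵀ * B)) *ᵥ v - (That * Thatᵀ * (Bᵀ * B)) *ᵥ v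
  have hBw : B *ᵥ w = (B * T * (B * T)ᵀ - B * That * (B * That)ᵀ) *ᵥ (B *ᵥ v) := by
    rw [mulVec_sub, mulVec_mulVec, mulVec_mulVec, hintertwine, hintertwine, sub_mulVec,
      mulVec_mulVec, mulVec_mulVec]
  calc w ⬝ᵥ S *ᵥ w ≤ M * (B *ᵥ w ⬝ᵥ B *ᵥ w) := hnormSq w ▸ hdom w
    _ ≤ M * (2 * (nc - frobSq ((B * That)ᵀ * (B * T))) * (B *ᵥ v ⬝ᵥ B *ᵥ v)) := by
        rw [hBw]
        gcongr
        exact mul_transpose_sub_mul_transpose_mulVec_normSq_le (horthonormal hT)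
          (horthonormal hThat) _
    _ = _ := by rw [hgram, hnormSq]; ring

/-- perturbation bound. For the `Ã`-orthogonal projectors
`Π = T Tᵀ Ã` and `Π̂ = T̂ T̂ᵀ Ã` and any `v`,
`(Π v − Π̂ v)ᵀ S (Π v − Π̂ v) ≤ 2 M (n^c − ‖T̂ᵀ Ã T‖_F²) vᵀ Ã v`. -/
theorem projector_perturbation_bound {n nc : ℕ}
    (A S : Matrix (Fin n) (Fin n) ℝ)
    (hA : A.PosSemidef) (hS : S.PosSemidef)
    (M : ℝ) (hM : 0 < M)
    (hdom : ∀ x : Fin n → ℝ, x ⬝ᵥ S.mulVec x ≤ M * (x ⬝ᵥ A.mulVec x))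
    (T That : Matrix (Fin n) (Fin nc) ℝ)
    (hT : Tᵀ * A * T = 1) (hThat : Thatᵀ * A * That = 1) :
    ∀ v : Fin n → ℝ,
      ((T * Tᵀ * A).mulVec v - (That * Thatᵀ * A).mulVec v) ⬝ᵥ
          S.mulVec ((T * Tᵀ * A).mulVec v - (That * Thatᵀ * A).mulVec v) ≤
        2 * M * ((nc : ℝ) - frobSq (Thatᵀ * A * T)) * (v ⬝ᵥ A.mulVec v) :=
  projector_perturbation_bound_general A S hA M hM hdom T That hT hThat
end
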